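/- arXiv:math/0209341 — 4 statements merged into one kernel-verified Lean document; each statement's English description precedes it below -/
import Mathlib

section
/- Let E be a finite-dimensional complex vector space, and consider the scalar action of ℂ^× = ℂ \ {0} on E \ {0}. Let S ⊆ E \ {0} be invariant under multiplication by all of ℂ^×, and let U ⊆ E \ {0} be an open set invariant under multiplication by all positive reals, with S ⊆ U. Then there exists an open set V ⊆ E \ {0}, invariant under multiplication by ℂ^×, with S ⊆ V ⊆ U. -/
/-!
Take `V = ⋂_{|c| = 1} c⁻¹ U`. It is open by the tube lemma, since the unit circle is compact, and
it is `ℂˣ`-invariant because every nonzero `c` is a positive real times a unimodular scalar, the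
first factor being absorbed by the `ℝ>0`-invariance of `U`.
-/

open Metric

theorem IsCompact.isOpen_setOf_forall_smul_mem {M X : Type*} [TopologicalSpace M]
    [TopologicalSpace X] [SMul M X] [ContinuousSMul M X] {K : Set M} (hK : IsCompact K)
    {U : Set X} (hU : IsOpen U) : IsOpen {x : X | ∀ c ∈ K, c • x ∈ U} := by
  refine isOpen_iff_mem_nhds.2 fun x hx => ?_
  refine hK.eventually_forall_of_forall_eventually fun c hc => ?_
  have hcont : Continuous fun z : X × M => z.2 • z.1 := continuous_snd.smul continuous_fst
  exact hcont.continuousAt.preimage_mem_nhds (hU.mem_nhds (hx c hc))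

theorem smul_mem_setOf_forall_sphere_smul_mem {𝕜 E : Type*} [RCLike 𝕜] [AddCommGroup E]
    [Module 𝕜 E] {U : Set E} (hU : ∀ (r : ℝ), 0 < r → ∀ x ∈ U, (r : 𝕜) • x ∈ U) {c : 𝕜}
    (hc : c ≠ 0) {x : E} (hx : ∀ d ∈ sphere (0 : 𝕜) 1, d • x ∈ U) :
    ∀ d ∈ sphere (0 : 𝕜) 1, d • c • x ∈ U := by
  intro d hd
  have hnorm : (0 : ℝ) < ‖c‖ := norm_pos_iff.2 hc
  have hnorm' : (‖c‖ : 𝕜) ≠ 0 := RCLike.ofReal_ne_zero.2 hnorm.ne'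
  have hunit : d * c / ‖c‖ ∈ sphere (0 : 𝕜) 1 := by
    simp_all [norm_div]
  have hpolar : (‖c‖ : 𝕜) • (d * c / ‖c‖) • x = d • c • x := by
    rw [smul_smul, smul_smul, mul_div_cancel₀ _ hnorm', mul_comm]
  exact hpolar ▸ hU ‖c‖ hnorm _ (hx _ hunit)

theorem stmt_1_general {E : Type*} [NormedAddCommGroup E] [NormedSpace ℂ E]
    (S U : Set E) (hU0 : U ⊆ {x : E | x ≠ 0})
    (hSinv : ∀ (c : ℂ), c ≠ 0 → ∀ x ∈ S, c • x ∈ S)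
    (hUopen : IsOpen U)
    (hUinv : ∀ (r : ℝ), 0 < r → ∀ x ∈ U, (r : ℂ) • x ∈ U)
    (hSU : S ⊆ U) :
    ∃ V : Set E, IsOpen V ∧ V ⊆ {x : E | x ≠ 0} ∧
      (∀ (c : ℂ), c ≠ 0 → ∀ x ∈ V, c • x ∈ V) ∧ S ⊆ V ∧ V ⊆ U := by
  have hVU : {x : E | ∀ c ∈ sphere (0 : ℂ) 1, c • x ∈ U} ⊆ U := fun x hx => by
    simpa using hx 1 (by simp)
  refine ⟨{x | ∀ c ∈ sphere (0 : ℂ) 1, c • x ∈ U},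
    (isCompact_sphere 0 1).isOpen_setOf_forall_smul_mem hUopen, hVU.trans hU0,
    fun c hc x hx => smul_mem_setOf_forall_sphere_smul_mem hUinv hc hx, ?_, hVU⟩
  intro x hx c hc
  exact hSU (hSinv c (ne_zero_of_mem_sphere one_ne_zero ⟨c, hc⟩) x hx)

/-- In a finite-dimensional complex vector space `E`, any `ℂˣ`-invariant
subset `S` of `E \ {0}` contained in an `ℝ>0`-invariant open subset `U` of `E \ {0}`
admits a `ℂˣ`-invariant open neighborhood `V` with `S ⊆ V ⊆ U`. -/
theorem stmt_1 {E : Type*} [NormedAddCommGroup E] [NormedSpace ℂ E] [FiniteDimensional ℂ E]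
    (S U : Set E) (hS0 : S ⊆ {x : E | x ≠ 0}) (hU0 : U ⊆ {x : E | x ≠ 0})
    (hSinv : ∀ (c : ℂ), c ≠ 0 → ∀ x ∈ S, c • x ∈ S)
    (hUopen : IsOpen U)
    (hUinv : ∀ (r : ℝ), 0 < r → ∀ x ∈ U, (r : ℂ) • x ∈ U)
    (hSU : S ⊆ U) :
    ∃ V : Set E, IsOpen V ∧ V ⊆ {x : E | x ≠ 0} ∧
      (∀ (c : ℂ), c ≠ 0 → ∀ x ∈ V, c • x ∈ V) ∧ S ⊆ V ∧ V ⊆ U :=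
  stmt_1_general S U hU0 hSinv hUopen hUinv hSU
end

section
/- Let D be a triangulated category equipped with a t-structure (D^{≤0}, D^{≥0}) with heart C = D^{≤0} ∩ D^{≥0}. Let f : X → Y be a morphism in C and complete it to a distinguished triangle X → Y → Z → X[1] in D. Then the truncation τ^{≤-1}(Z)[-1] lies in C and is a kernel of f in the abelian category C, and τ^{≥0}(Z) lies in C and is a cokernel of f in C. -/
open CategoryTheory Limits Pretriangulated Triangulated

/-!
For `X, Y` in the heart there are no nonzero maps `X ⟶ Y⟦n⟧` with `n < 0`. By the argument of
[BBD, 1.2], which only uses the long exact `Hom`-sequences of triangles, a morphism `f : X ⟶ Y`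
of the heart then has kernel `K` and cokernel `Q` whenever its cone `Z` sits in a distinguished
triangle `K⟦1⟧ ⟶ Z ⟶ Q ⟶ K⟦2⟧` with `K, Q` in the heart. As `D^{≤ n}` and `D^{≥ n}` are closed
under extensions, `Z` lies in degrees `[-1, 0]`; hence `τ^{≤ -1} Z` is concentrated in degree
`-1` and `τ^{≥ 0} Z` in degree `0`, and the truncation triangle of `Z` is such a triangle.
-/

namespace CategoryTheory

variable {C G : Type*} [Category C] [AddGroup G] [HasShift C G]

lemma shift_map_shift_comp_shiftFunctorCompIsoId_hom_app (n m : G) (hnm : n + m = 0) {A X : C}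
    (φ : A ⟶ X⟦n⟧) :
    (φ⟦m⟧' ≫ (shiftFunctorCompIsoId C n m hnm).hom.app X)⟦n⟧' =
      (shiftFunctorCompIsoId C m n
        (by rw [← neg_eq_of_add_eq_zero_left hnm, add_neg_cancel])).hom.app A ≫ φ := by
  rw [Functor.map_comp, shift_shiftFunctorCompIsoId_hom_app]
  exact (shiftFunctorCompIsoId C m n _).hom.naturality φ

end CategoryTheory

namespace CategoryTheory.ObjectProperty

variable {C : Type*} [Category C] [Preadditive C] {P : ObjectProperty C}

lemma existsUnique_lift_of_isLimit_kernelFork {K X Y : P.FullSubcategory} {f : X ⟶ Y}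
    {i : K ⟶ X} {w : i ≫ f = 0} (hK : IsLimit (KernelFork.ofι i w)) {W : C} (hW : P W)
    (u : W ⟶ X.obj) (hu : u ≫ f.hom = 0) : ∃! v : W ⟶ K.obj, v ≫ i.hom = u := by
  have : Mono i := Fork.IsLimit.mono hK
  obtain ⟨v, hv : v ≫ i = homMk u⟩ :=
    KernelFork.IsLimit.lift' hK (homMk u : ⟨W, hW⟩ ⟶ X) (by ext; exact hu)
  refine ⟨v.hom, congr_arg (·.hom) hv, fun v' hv' => ?_⟩
  have : (homMk v' : ⟨W, hW⟩ ⟶ K) = v := by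
    rw [← cancel_mono i, hv]; ext; exact hv'
  exact congr_arg (·.hom) this

lemma existsUnique_desc_of_isColimit_cokernelCofork {X Y Q : P.FullSubcategory} {f : X ⟶ Y}
    {p : Y ⟶ Q} {w : f ≫ p = 0} (hQ : IsColimit (CokernelCofork.ofπ p w)) {W : C} (hW : P W)
    (u : Y.obj ⟶ W) (hu : f.hom ≫ u = 0) : ∃! v : Q.obj ⟶ W, p.hom ≫ v = u := by
  have : Epi p := Cofork.IsColimit.epi hQ
  obtain ⟨v, hv : p ≫ v = homMk u⟩ :=
    CokernelCofork.IsColimit.desc' hQ (homMk u : Y ⟶ ⟨W, hW⟩) (by ext; exact hu)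
  refine ⟨v.hom, congr_arg (·.hom) hv, fun v' hv' => ?_⟩
  have : (homMk v' : Q ⟶ ⟨W, hW⟩) = v := by
    rw [← cancel_epi p, hv]; ext; exact hv'
  exact congr_arg (·.hom) this

end CategoryTheory.ObjectProperty

namespace CategoryTheory.Pretriangulated

variable {C : Type*} [Category C] [Preadditive C] [HasZeroObject C] [HasShift C ℤ]
  [∀ n : ℤ, (shiftFunctor C n).Additive] [Pretriangulated C]

lemma distinguished_mk_iso_hom_comp {A' A Z B : C} (e : A' ≅ A) (a : A ⟶ Z) (b : Z ⟶ B)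
    (c : B ⟶ A⟦(1 : ℤ)⟧) (hT : Triangle.mk a b c ∈ distTriang C) :
    Triangle.mk (e.hom ≫ a) b (c ≫ e.inv⟦(1 : ℤ)⟧') ∈ distTriang C := by
  refine isomorphic_distinguished _ hT _ (Triangle.isoMk _ _ e (Iso.refl _) (Iso.refl _) ?_ ?_ ?_)
  -- `simp` does not reduce the projections `(Triangle.mk _ _ _).objᵢ` by itself
  all_goals dsimp only [Triangle.mk]; simp [← Functor.map_comp]

end CategoryTheory.Pretriangulated

namespace CategoryTheory.Triangulated.TStructure

variable {C : Type*} [Category C] [Preadditive C] [HasZeroObject C] [HasShift C ℤ]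
  [∀ n : ℤ, (shiftFunctor C n).Additive] [Pretriangulated C] (t : TStructure C)

lemma isLE₃ (T : Triangle C) (hT : T ∈ distTriang C) (n₀ n₁ : ℤ)
    (h₁ : t.IsLE T.obj₁ n₁) (h₂ : t.IsLE T.obj₂ n₀) (h : n₀ + 1 = n₁ := by lia) :
    t.IsLE T.obj₃ n₀ :=
  t.isLE₂ _ (rot_of_distTriang _ hT) n₀ h₂ (t.isLE_shift T.obj₁ n₁ 1 n₀)

lemma isGE₃ (T : Triangle C) (hT : T ∈ distTriang C) (n₀ n₁ : ℤ)
    (h₁ : t.IsGE T.obj₁ n₁) (h₂ : t.IsGE T.obj₂ n₀) (h : n₀ + 1 = n₁ := by lia) :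
    t.IsGE T.obj₃ n₀ :=
  t.isGE₂ _ (rot_of_distTriang _ hT) n₀ h₂ (t.isGE_shift T.obj₁ n₁ 1 n₀)

lemma isGE₁ (T : Triangle C) (hT : T ∈ distTriang C) (n₀ n₁ : ℤ)
    (h₂ : t.IsGE T.obj₂ n₁) (h₃ : t.IsGE T.obj₃ n₀) (h : n₀ + 1 = n₁ := by lia) :
    t.IsGE T.obj₁ n₁ :=
  t.isGE₂ _ (inv_rot_of_distTriang _ hT) n₁ (t.isGE_shift T.obj₃ n₀ (-1) n₁) h₂

lemma heart_obj₃_of_isLE_obj₁ (T : Triangle C) (hT : T ∈ distTriang C)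
    (h₁ : t.IsLE T.obj₁ (-1)) (h₂ : t.IsLE T.obj₂ 0) (h₃ : t.IsGE T.obj₃ 0) :
    t.heart T.obj₃ :=
  ⟨(t.isLE₃ T hT 0 1 (t.isLE_of_le _ (-1) 1) h₂).le, h₃.ge⟩

lemma heart_shift_obj₁_of_isGE_obj₃ (T : Triangle C) (hT : T ∈ distTriang C)
    (h₁ : t.IsLE T.obj₁ (-1)) (h₂ : t.IsGE T.obj₂ (-1)) (h₃ : t.IsGE T.obj₃ 0) :
    t.heart (T.obj₁⟦(-1 : ℤ)⟧) := by
  have := t.isGE₁ T hT (-2) (-1) h₂ (t.isGE_of_ge _ (-2) 0)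
  exact ⟨(t.isLE_shift _ (-1) (-1) 0).le, (t.isGE_shift _ (-1) (-1) 0).ge⟩

lemma heart_hom_shift_eq_zero ⦃X Y : t.heart.FullSubcategory⦄ ⦃n : ℤ⦄
    (f : t.heart.ι.obj X ⟶ (t.heart.ι.obj Y)⟦n⟧) (hn : n < 0) : f = 0 :=
  t.zero_of_isLE_of_isGE f 0 (-n) (by lia) ⟨X.2.1⟩ ⟨t.ge_shift 0 n (-n) (by lia) _ Y.2.2⟩

end CategoryTheory.Triangulated.TStructure

/-- Let `t` be a t-structure on a triangulated category `D` with heart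
`C = D^{≤0} ∩ D^{≥0}` (encoded by the predicates `t.le 0` and `t.ge 0`).  Let
`f : X ⟶ Y` be a morphism in the heart, embedded in a distinguished triangle
`X ⟶ Y ⟶ Z ⟶ X⟦1⟧`.  If `A ⟶ Z ⟶ B ⟶ A⟦1⟧` is a (truncation) distinguished triangle
with `A = τ^{≤ -1} Z` (i.e. `t.le (-1) A`) and `B = τ^{≥ 0} Z` (i.e. `t.ge 0 B`), then
`A⟦-1⟧` lies in the heart and the induced map `A⟦-1⟧ ⟶ X` is a kernel of `f` in the
heart, and `B` lies in the heart and the induced map `Y ⟶ B` is a cokernel of `f` in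
the heart. -/
theorem stmt_5 {D : Type*} [Category D] [Preadditive D] [HasZeroObject D] [HasShift D ℤ]
    [∀ n : ℤ, (shiftFunctor D n).Additive] [Pretriangulated D]
    (t : TStructure D) (X Y Z : D)
    (hX : t.le 0 X ∧ t.ge 0 X) (hY : t.le 0 Y ∧ t.ge 0 Y)
    (f : X ⟶ Y) (g : Y ⟶ Z) (h : Z ⟶ X⟦(1 : ℤ)⟧)
    (hT : Triangle.mk f g h ∈ distTriang D)
    (A B : D) (a : A ⟶ Z) (b : Z ⟶ B) (c : B ⟶ A⟦(1 : ℤ)⟧)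
    (hA : t.le (-1) A) (hB : t.ge 0 B)
    (hT' : Triangle.mk a b c ∈ distTriang D) :
    -- the induced "kernel inclusion" `A⟦-1⟧ ⟶ X` obtained from `A ⟶ Z ⟶ X⟦1⟧` by shifting
    ∀ k : A⟦(-1 : ℤ)⟧ ⟶ X,
      k = a⟦(-1 : ℤ)⟧' ≫ h⟦(-1 : ℤ)⟧' ≫
            (shiftFunctorCompIsoId D (1 : ℤ) (-1 : ℤ) (by omega)).hom.app X →
      -- `A⟦-1⟧` is in the heart and `k` is a kernel of `f` in the heart
      ((t.le 0 (A⟦(-1 : ℤ)⟧) ∧ t.ge 0 (A⟦(-1 : ℤ)⟧)) ∧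
        k ≫ f = 0 ∧
        (∀ (W : D), t.le 0 W → t.ge 0 W → ∀ u : W ⟶ X, u ≫ f = 0 →
          ∃! v : W ⟶ A⟦(-1 : ℤ)⟧, v ≫ k = u)) ∧
      -- `B` is in the heart and `g ≫ b : Y ⟶ B` is a cokernel of `f` in the heart
      ((t.le 0 B ∧ t.ge 0 B) ∧
        f ≫ (g ≫ b) = 0 ∧
        (∀ (W : D), t.le 0 W → t.ge 0 W → ∀ w : Y ⟶ W, f ≫ w = 0 →
          ∃! v : B ⟶ W, (g ≫ b) ≫ v = w)) := by
  intro k hk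
  have hZle : t.IsLE Z 0 := t.isLE₃ _ hT 0 1 ⟨t.le_monotone (by lia) _ hX.1⟩ ⟨hY.1⟩
  have hZge : t.IsGE Z (-1) := t.isGE₃ _ hT (-1) 0 ⟨hX.2⟩ ⟨t.ge_antitone (by lia) _ hY.2⟩
  let X' : t.heart.FullSubcategory := ⟨X, hX⟩
  let Y' : t.heart.FullSubcategory := ⟨Y, hY⟩
  let K : t.heart.FullSubcategory :=
    ⟨A⟦(-1 : ℤ)⟧, t.heart_shift_obj₁_of_isGE_obj₃ _ hT' ⟨hA⟩ hZge ⟨hB⟩⟩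
  let Q : t.heart.FullSubcategory := ⟨B, t.heart_obj₃_of_isLE_obj₁ _ hT' ⟨hA⟩ hZle ⟨hB⟩⟩
  let e := (shiftFunctorCompIsoId D (-1 : ℤ) 1 (by lia)).app A
  have hTf : Triangle.mk (t.heart.ι.map (ObjectProperty.homMk f : X' ⟶ Y')) g h ∈ distTriang D :=
    hT
  have hTe := distinguished_mk_iso_hom_comp e a b c hT'
  have hk' : (AbelianSubcategory.ιK (ι := t.heart.ι) (K := K) (X₁ := X') h (e.hom ≫ a)).hom = k :=
    (shiftFunctor D (1 : ℤ)).map_injective (by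
      rw [hk, ← Functor.map_comp_assoc, shift_map_shift_comp_shiftFunctorCompIsoId_hom_app,
        ← Category.assoc]
      exact AbelianSubcategory.shift_ι_map_ιK (ι := t.heart.ι) (X₁ := X') h _)
  have hgb : (AbelianSubcategory.πQ (ι := t.heart.ι) (X₂ := Y') (Q := Q) g b).hom = g ≫ b :=
    AbelianSubcategory.ι_map_πQ (ι := t.heart.ι) (X₂ := Y') (Q := Q) g b
  have hker := AbelianSubcategory.isLimitKernelFork (K := K) (Q := Q)
    t.heart_hom_shift_eq_zero hTf hTe
  have hcoker := AbelianSubcategory.isColimitCokernelCofork (K := K) (Q := Q)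
    t.heart_hom_shift_eq_zero hTf hTe
  subst hk'
  rw [← hgb]
  exact ⟨⟨K.2, congr_arg (·.hom) (AbelianSubcategory.ιK_mor₁ (K := K) hTf (e.hom ≫ a)),
      fun W hW₀ hW₀' => ObjectProperty.existsUnique_lift_of_isLimit_kernelFork hker ⟨hW₀, hW₀'⟩⟩,
    ⟨Q.2, congr_arg (·.hom) (AbelianSubcategory.mor₁_πQ (Q := Q) hTf b),
      fun W hW₀ hW₀' => ObjectProperty.existsUnique_desc_of_isColimit_cokernelCofork hcoker
        ⟨hW₀, hW₀'⟩⟩⟩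
end

section
/- Let T be an assignment of a triangulated category C(U) to each open subset U of a topological space X, with exact restriction functors i_{VU}^{-1} : C(U) → C(V) for V ⊆ U (compatible up to coherent natural isomorphism). Assume: (1) each restriction functor i_{VU}^{-1} admits a fully faithful exact left adjoint i_{VU!}; (2) base change holds: for opens U₁, U₂ ⊆ V with U₁₂ = U₁ ∩ U₂, one has i_{U₁₂,U₂!} ∘ i_{U₁₂,U₁}^{-1} ≅ i_{U₂,V}^{-1} ∘ i_{U₁,V!}. Let U = U₁ ∪ U₂, and suppose given objects A₁ ∈ C(U₁), A₂ ∈ C(U₂) and an isomorphism f₂₁ : A₁|_{U₁₂} ≅ A₂|_{U₁₂}. Then there exists an object A ∈ C(U) and isomorphisms f₁ : A|_{U₁} ≅ A₁, f₂ : A|_{U₂} ≅ A₂ such that f₂₁ ∘ f₁|_{U₁₂} = f₂|_{U₁₂}. -/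
/-!
Write `R₁`, `R₂`, `R` for restriction from `U = U₁ ∪ U₂` to `U₁`, `U₂`, `U₁₂` and `L₁`, `L₂`, `L`
for their left adjoints. The glued object `A` is the cone of
`(φ₁, φ₂) : L (A₁|U₁₂) → L₁ A₁ ⊞ L₂ A₂`, where `φ₁`, `φ₂` are the transposes along `L ⊣ R` of the
units `A₁ → R₁ L₁ A₁` and `A₂ → R₂ L₂ A₂` restricted to `U₁₂`, the second precomposed with `-f₂₁`.
Each `φᵢ` is an isomorphism followed by `Lᵢ` of a morphism that is invertible on `U₁₂`, so by base
change `φ₂` becomes invertible on `U₁` and `φ₁` on `U₂`. Restricting the cone triangle to `U₁`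
then makes `L₁ A₁ → A` invertible there, and `A₁ ≅ (L₁ A₁)|U₁` since `L₁` is fully faithful;
symmetrically on `U₂`. Transposing the relation `(φ₁, φ₂) ≫ (L₁ A₁ ⊞ L₂ A₂ → A) = 0` along
`L ⊣ R` gives the compatibility with `f₂₁`.
-/

open CategoryTheory Limits Pretriangulated TopologicalSpace Opposite

universe v u

namespace CategoryTheory

open Category Preadditive

variable {C : Type*} [Category C] [HasZeroObject C] [Preadditive C]
  [HasShift C ℤ] [∀ n : ℤ, (shiftFunctor C n).Additive] [Pretriangulated C]

lemma Pretriangulated.isIso_comp_mor₂_of_isIso_mor₁_comp {X Y Z P Q : C} {φ : X ⟶ Y} {ρ : Y ⟶ Z}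
    {θ : Z ⟶ X⟦(1 : ℤ)⟧} (hT : Triangle.mk φ ρ θ ∈ distTriang C)
    (i : P ⟶ Y) (p : Y ⟶ P) (j : Q ⟶ Y) (q : Y ⟶ Q)
    (hip : i ≫ p = 𝟙 P) (hiq : i ≫ q = 0) (htotal : p ≫ i + q ≫ j = 𝟙 Y) [IsIso (φ ≫ q)] :
    IsIso (i ≫ ρ) := by
  obtain ⟨s, hs, hs'⟩ := (inferInstance : IsIso (φ ≫ q)).out
  simp only [assoc] at hs
  have hqj : q ≫ j = 𝟙 Y - p ≫ i := by rw [← htotal, add_sub_cancel_left]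
  -- in the decomposition `Y ≅ X ⊞ P` below, `φ` becomes the inclusion of the first summand
  let e : Y ≅ X ⊞ P :=
    { hom := biprod.lift (q ≫ s) (p - q ≫ s ≫ φ ≫ p)
      inv := biprod.desc φ i
      hom_inv_id := by
        have : q ≫ s ≫ φ ≫ q ≫ j = q ≫ j := by rw [reassoc_of% hs']
        simp only [hqj, comp_sub, comp_id] at this
        simp only [biprod.lift_desc, sub_comp, assoc]
        calc _ = p ≫ i + (q ≫ s ≫ φ - q ≫ s ≫ φ ≫ p ≫ i) := by abel
          _ = 𝟙 Y := by rw [this, add_sub_cancel]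
      inv_hom_id := by
        apply biprod.hom_ext' <;> apply biprod.hom_ext <;>
          simp [hip, comp_sub, hs, reassoc_of% hs, reassoc_of% hiq] }
  have hφ : φ ≫ e.hom = 𝟙 X ≫ biprod.inl := by
    apply biprod.hom_ext <;> simp [e, comp_sub, hs, reassoc_of% hs]
  let ψ := isoTriangleOfIso₁₂ _ _ hT (binaryBiproductTriangle_distinguished X P) (Iso.refl X) e hφ
  let e₃ : Z ≅ P := Triangle.π₃.mapIso ψ
  have hψ : ρ ≫ e₃.hom = e.hom ≫ biprod.snd := ψ.hom.comm₂
  have : (i ≫ ρ) ≫ e₃.hom = 𝟙 P := by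
    rw [assoc, hψ]; simp [e, comp_sub, reassoc_of% hiq, hip]
  rw [(Iso.comp_hom_eq_id e₃).mp this]
  infer_instance

variable {D : Type*} [Category D] [HasZeroObject D] [Preadditive D]
  [HasShift D ℤ] [∀ n : ℤ, (shiftFunctor D n).Additive] [Pretriangulated D]
  (F : C ⥤ D) [F.CommShift ℤ] [F.IsTriangulated]
  {X Z P Q : C} {φ₁ : X ⟶ P} {φ₂ : X ⟶ Q} {ρ : P ⊞ Q ⟶ Z} {θ : Z ⟶ X⟦(1 : ℤ)⟧}

lemma Functor.map_distinguished_mk {X₁ X₂ X₃ : C} {f : X₁ ⟶ X₂} {g : X₂ ⟶ X₃}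
    {h : X₃ ⟶ X₁⟦(1 : ℤ)⟧} (hT : Triangle.mk f g h ∈ distTriang C) :
    Triangle.mk (F.map f) (F.map g) (F.map h ≫ (F.commShiftIso (1 : ℤ)).hom.app X₁) ∈
      distTriang D :=
  F.map_distinguished _ hT

lemma Pretriangulated.isIso_map_inl_comp_of_distinguished
    (hT : Triangle.mk (biprod.lift φ₁ φ₂) ρ θ ∈ distTriang C) [IsIso (F.map φ₂)] :
    IsIso (F.map (biprod.inl ≫ ρ)) := by
  have : IsIso (F.map (biprod.lift φ₁ φ₂) ≫ F.map biprod.snd) := by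
    rw [← F.map_comp, biprod.lift_snd]; infer_instance
  rw [F.map_comp]
  exact isIso_comp_mor₂_of_isIso_mor₁_comp (F.map_distinguished_mk hT) (F.map biprod.inl)
    (F.map biprod.fst) (F.map biprod.inr) (F.map biprod.snd) (by simp [← F.map_comp])
    (by simp [← F.map_comp])
    (by rw [← F.map_comp, ← F.map_comp, ← F.map_add, biprod.total, F.map_id])

lemma Pretriangulated.isIso_map_inr_comp_of_distinguished
    (hT : Triangle.mk (biprod.lift φ₁ φ₂) ρ θ ∈ distTriang C) [IsIso (F.map φ₁)] :
    IsIso (F.map (biprod.inr ≫ ρ)) := by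
  have : IsIso (F.map (biprod.lift φ₁ φ₂) ≫ F.map biprod.fst) := by
    rw [← F.map_comp, biprod.lift_fst]; infer_instance
  rw [F.map_comp]
  exact isIso_comp_mor₂_of_isIso_mor₁_comp (F.map_distinguished_mk hT) (F.map biprod.inr)
    (F.map biprod.snd) (F.map biprod.inl) (F.map biprod.fst) (by simp [← F.map_comp])
    (by simp [← F.map_comp])
    (by rw [add_comm, ← F.map_comp, ← F.map_comp, ← F.map_add, biprod.total, F.map_id])

end CategoryTheory

namespace CategoryTheory.Adjunction

open Category

variable {C D E : Type*} [Category C] [Category D] [Category E]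

lemma isIso_map_homEquiv_symm {L : C ⥤ D} {R : D ⥤ C} [L.Full] [L.Faithful] (adj : L ⊣ R)
    {X : C} {Y : D} (g : X ⟶ R.obj Y) [IsIso g] : IsIso (R.map ((adj.homEquiv X Y).symm g)) := by
  have : R.map ((adj.homEquiv X Y).symm g) = inv (adj.unit.app X) ≫ g := by
    rw [IsIso.eq_inv_comp]
    exact (adj.homEquiv_unit _ _ _).symm.trans (Equiv.apply_symm_apply _ _)
  rw [this]
  infer_instance

lemma exists_iso_homEquiv_symm_eq {LA : C ⥤ D} {RA : D ⥤ C} {LB : D ⥤ E} {RB : E ⥤ D}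
    {LW : C ⥤ E} {RW : E ⥤ C} (adjA : LA ⊣ RA) (adjB : LB ⊣ RB) (adjW : LW ⊣ RW)
    (hc : RB ⋙ RA = RW) {X : C} {Y : D} (g : X ⟶ RA.obj Y) :
    ∃ e : LW.obj X ≅ (LA ⋙ LB).obj X,
      (adjW.homEquiv X (LB.obj Y)).symm
          (g ≫ RA.map (adjB.unit.app Y) ≫ eqToHom (Functor.congr_obj hc (LB.obj Y))) =
        e.hom ≫ LB.map ((adjA.homEquiv X Y).symm g) := by
  subst hc
  refine ⟨(adjW.leftAdjointUniq (adjA.comp adjB)).app X, ?_⟩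
  rw [Equiv.symm_apply_eq, homEquiv_naturality_right, Iso.app_hom,
    homEquiv_leftAdjointUniq_hom_app, comp_unit_app, eqToHom_refl, comp_id, Functor.comp_map, assoc,
    ← RA.map_comp, adjB.unit_naturality, RA.map_comp, ← assoc, ← homEquiv_unit,
    Equiv.apply_symm_apply]

lemma isIso_map_homEquiv_symm_comp_map_unit {E' : Type*} [Category E'] {LA : C ⥤ D} {RA : D ⥤ C}
    {LB : D ⥤ E} {RB : E ⥤ D} {LW : C ⥤ E} {RW : E ⥤ C} [LA.Full] [LA.Faithful]
    (adjA : LA ⊣ RA) (adjB : LB ⊣ RB) (adjW : LW ⊣ RW) (hc : RB ⋙ RA = RW) {G : E ⥤ E'}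
    (hG : ∀ {Y Y' : D} (f : Y ⟶ Y'), IsIso (RA.map f) → IsIso (G.map (LB.map f)))
    {X : C} {Y : D} (g : X ⟶ RA.obj Y) [IsIso g] :
    IsIso (G.map ((adjW.homEquiv X (LB.obj Y)).symm
      (g ≫ RA.map (adjB.unit.app Y) ≫ eqToHom (Functor.congr_obj hc (LB.obj Y))))) := by
  obtain ⟨e, he⟩ := exists_iso_homEquiv_symm_eq adjA adjB adjW hc g
  have := hG _ (adjA.isIso_map_homEquiv_symm g)
  rw [he, G.map_comp]
  infer_instance

end CategoryTheory.Adjunction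

lemma CategoryTheory.Functor.eqToHom_comp_map_of_comp_eq {C D E : Type*}
    [Category C] [Category D] [Category E] {F : C ⥤ D} {G : D ⥤ E} {H : C ⥤ E} (h : F ⋙ G = H)
    {X Y : C} (f : X ⟶ Y) :
    eqToHom (Functor.congr_obj h X : G.obj (F.obj X) = H.obj X) ≫ H.map f =
      G.map (F.map f) ≫ eqToHom (Functor.congr_obj h Y) := by
  subst h
  simp

section Gluing

open Category Preadditive

variable {C C₁ C₂ C₁₂ : Type*} [Category C] [Category C₁] [Category C₂] [Category C₁₂]
  [HasZeroObject C] [Preadditive C] [HasShift C ℤ] [∀ n : ℤ, (shiftFunctor C n).Additive]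
  [Pretriangulated C]
  [HasZeroObject C₁] [Preadditive C₁] [HasShift C₁ ℤ] [∀ n : ℤ, (shiftFunctor C₁ n).Additive]
  [Pretriangulated C₁]
  [HasZeroObject C₂] [Preadditive C₂] [HasShift C₂ ℤ] [∀ n : ℤ, (shiftFunctor C₂ n).Additive]
  [Pretriangulated C₂] [Preadditive C₁₂]

/-- `C`, `C₁`, `C₂`, `C₁₂` play the roles of `C(U)`, `C(U₁)`, `C(U₂)`, `C(U₁ ∩ U₂)`; `hbc₁` follows
from base change `S₁ ⋙ M₂ ≅ L₁ ⋙ R₂`, and `hbc₂` likewise. -/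
theorem exists_glue {R₁ : C ⥤ C₁} {R₂ : C ⥤ C₂} {S₁ : C₁ ⥤ C₁₂} {S₂ : C₂ ⥤ C₁₂} {R : C ⥤ C₁₂}
    [R₁.CommShift ℤ] [R₁.IsTriangulated] [R₂.CommShift ℤ] [R₂.IsTriangulated] [R.Additive]
    {L₁ : C₁ ⥤ C} {L₂ : C₂ ⥤ C} {M₁ : C₁₂ ⥤ C₁} {M₂ : C₁₂ ⥤ C₂} {L : C₁₂ ⥤ C}
    [L₁.Full] [L₁.Faithful] [L₂.Full] [L₂.Faithful] [M₁.Full] [M₁.Faithful] [M₂.Full] [M₂.Faithful]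
    (adj₁ : L₁ ⊣ R₁) (adj₂ : L₂ ⊣ R₂) (adjM₁ : M₁ ⊣ S₁) (adjM₂ : M₂ ⊣ S₂) (adj : L ⊣ R)
    (hc₁ : R₁ ⋙ S₁ = R) (hc₂ : R₂ ⋙ S₂ = R)
    (hbc₁ : ∀ {Y Y' : C₁} (f : Y ⟶ Y'), IsIso (S₁.map f) → IsIso (R₂.map (L₁.map f)))
    (hbc₂ : ∀ {Y Y' : C₂} (f : Y ⟶ Y'), IsIso (S₂.map f) → IsIso (R₁.map (L₂.map f)))
    (A₁ : C₁) (A₂ : C₂) (f₂₁ : S₁.obj A₁ ≅ S₂.obj A₂) :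
    ∃ (A : C) (f₁ : R₁.obj A ≅ A₁) (f₂ : R₂.obj A ≅ A₂),
      eqToIso (Functor.congr_obj hc₁ A).symm ≪≫ S₁.mapIso f₁ ≪≫ f₂₁ =
        eqToIso (Functor.congr_obj hc₂ A).symm ≪≫ S₂.mapIso f₂ := by
  let φ₁ : L.obj (S₁.obj A₁) ⟶ L₁.obj A₁ := (adj.homEquiv _ _).symm
    (𝟙 _ ≫ S₁.map (adj₁.unit.app A₁) ≫ eqToHom (Functor.congr_obj hc₁ _))
  let φ₂ : L.obj (S₁.obj A₁) ⟶ L₂.obj A₂ := (adj.homEquiv _ _).symm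
    ((-f₂₁).hom ≫ S₂.map (adj₂.unit.app A₂) ≫ eqToHom (Functor.congr_obj hc₂ _))
  have : IsIso (R₂.map φ₁) := adjM₁.isIso_map_homEquiv_symm_comp_map_unit adj₁ adj hc₁ hbc₁ _
  have : IsIso (R₁.map φ₂) := adjM₂.isIso_map_homEquiv_symm_comp_map_unit adj₂ adj hc₂ hbc₂ _
  obtain ⟨A, ρ, θ, hT⟩ := distinguished_cocone_triangle (biprod.lift φ₁ φ₂)
  have : IsIso (R₁.map (biprod.inl ≫ ρ)) := isIso_map_inl_comp_of_distinguished R₁ hT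
  have : IsIso (R₂.map (biprod.inr ≫ ρ)) := isIso_map_inr_comp_of_distinguished R₂ hT
  let g₁ : A₁ ⟶ R₁.obj A := adj₁.unit.app A₁ ≫ R₁.map (biprod.inl ≫ ρ)
  let g₂ : A₂ ⟶ R₂.obj A := adj₂.unit.app A₂ ≫ R₂.map (biprod.inr ≫ ρ)
  refine ⟨A, (asIso g₁).symm, (asIso g₂).symm, ?_⟩
  have hzero : φ₁ ≫ biprod.inl ≫ ρ + φ₂ ≫ biprod.inr ≫ ρ = 0 := by
    have : biprod.lift φ₁ φ₂ ≫ ρ = 0 := comp_distTriang_mor_zero₁₂ _ hT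
    rwa [biprod.lift_eq, add_comp, assoc, assoc] at this
  have key : S₁.map g₁ ≫ eqToHom (Functor.congr_obj hc₁ A) =
      f₂₁.hom ≫ S₂.map g₂ ≫ eqToHom (Functor.congr_obj hc₂ A) := by
    have := adj.left_adjoint_additive
    have htr := congrArg (adj.homEquiv _ _) hzero
    simp only [φ₁, φ₂, Adjunction.homAddEquiv_add, Adjunction.homAddEquiv_zero,
      Adjunction.homEquiv_naturality_right, Equiv.apply_symm_apply, neg_iso_hom, neg_comp, id_comp,
      assoc] at htr
    dsimp only [Functor.comp_obj] at htr
    rw [Functor.eqToHom_comp_map_of_comp_eq hc₁, Functor.eqToHom_comp_map_of_comp_eq hc₂,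
      add_neg_eq_zero] at htr
    simpa [g₁, g₂] using htr
  ext
  simp only [Iso.trans_hom, eqToIso.hom, Functor.mapIso_hom, Iso.symm_hom, asIso_inv]
  rw [← cancel_epi (S₁.map g₁ ≫ eqToHom (Functor.congr_obj hc₁ A))]
  conv_rhs => rw [key]
  simp

end Gluing

section Prestack

variable {P : Type*} [Lattice P] (T : Pᵒᵖ ⥤ Cat.{v, u})

lemma map_homOfLE_comp_map_homOfLE {a b c : P} (hab : a ≤ b) (hbc : b ≤ c) (hac : a ≤ c) :
    (T.map (homOfLE hbc).op).toFunctor ⋙ (T.map (homOfLE hab).op).toFunctor =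
      (T.map (homOfLE hac).op).toFunctor := by
  rw [← Cat.Hom.comp_toFunctor, ← T.map_comp]
  rfl

lemma isIso_map_map_of_baseChange (L : ∀ {V U : P}, V ≤ U → (T.obj (op V) ⟶ T.obj (op U)))
    (hbc : ∀ {U₁ U₂ V : P} (h1 : U₁ ≤ V) (h2 : U₂ ≤ V),
      Nonempty (((T.map (homOfLE (inf_le_left : U₁ ⊓ U₂ ≤ U₁)).op).toFunctor ⋙
          (L (inf_le_right : U₁ ⊓ U₂ ≤ U₂)).toFunctor) ≅
        ((L h1).toFunctor ⋙ (T.map (homOfLE h2).op).toFunctor)))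
    {U₁ U₂ V W : P} (h1 : U₁ ≤ V) (h2 : U₂ ≤ V) (hW : U₁ ⊓ U₂ ≤ W) (hWU : W ≤ U₁)
    {Y Y' : T.obj (op U₁)} (f : Y ⟶ Y') (hf : IsIso ((T.map (homOfLE hWU).op).toFunctor.map f)) :
    IsIso ((T.map (homOfLE h2).op).toFunctor.map ((L h1).toFunctor.map f)) := by
  obtain ⟨e⟩ := hbc h1 h2
  rw [← map_homOfLE_comp_map_homOfLE T hW hWU inf_le_left] at e
  exact (NatIso.isIso_map_iff e f).mp (by dsimp only [Functor.comp_map]; infer_instance)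

end Prestack

/-- Let `T` be a prestack of triangulated categories on a space `X`
(modelled as a functor `(Opens X)ᵒᵖ ⥤ Cat` with triangulated values and exact
restrictions), such that each restriction functor admits a fully faithful left adjoint
`L` and these adjoints satisfy base change.  Then objects given on `U₁` and `U₂`
together with an isomorphism on `U₁ ⊓ U₂` glue to an object on `U₁ ⊔ U₂`, compatibly
with the given isomorphism. -/
theorem stmt_8 {X : Type u} [TopologicalSpace X]
    (T : (Opens X)ᵒᵖ ⥤ Cat.{v, v})
    [∀ U : (Opens X)ᵒᵖ, HasZeroObject (T.obj U)]
    [∀ U : (Opens X)ᵒᵖ, Preadditive (T.obj U)]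
    [∀ U : (Opens X)ᵒᵖ, HasShift (T.obj U) ℤ]
    [∀ (U : (Opens X)ᵒᵖ) (n : ℤ), (shiftFunctor (T.obj U) n).Additive]
    [∀ U : (Opens X)ᵒᵖ, Pretriangulated (T.obj U)]
    [∀ (V U : (Opens X)ᵒᵖ) (f : V ⟶ U), (T.map f).toFunctor.CommShift ℤ]
    [∀ (V U : (Opens X)ᵒᵖ) (f : V ⟶ U), (T.map f).toFunctor.IsTriangulated]
    -- (1) fully faithful left adjoints to the restriction functors
    (L : ∀ {V U : Opens X}, V ≤ U → (T.obj (op V) ⟶ T.obj (op U)))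
    (adj : ∀ {V U : Opens X} (h : V ≤ U), (L h).toFunctor ⊣ (T.map (homOfLE h).op).toFunctor)
    (hfull : ∀ {V U : Opens X} (h : V ≤ U), (L h).toFunctor.Full)
    (hfaithful : ∀ {V U : Opens X} (h : V ≤ U), (L h).toFunctor.Faithful)
    -- (2) base change
    (hbc : ∀ {U₁ U₂ V : Opens X} (h1 : U₁ ≤ V) (h2 : U₂ ≤ V),
      Nonempty (((T.map (homOfLE (inf_le_left : U₁ ⊓ U₂ ≤ U₁)).op).toFunctor ⋙
          (L (inf_le_right : U₁ ⊓ U₂ ≤ U₂)).toFunctor) ≅ ((L h1).toFunctor ⋙ (T.map (homOfLE h2).op).toFunctor)))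
    -- the gluing data
    (U₁ U₂ : Opens X) (A₁ : T.obj (op U₁)) (A₂ : T.obj (op U₂))
    (f21 : (T.map (homOfLE (inf_le_left : U₁ ⊓ U₂ ≤ U₁)).op).toFunctor.obj A₁ ≅
           (T.map (homOfLE (inf_le_right : U₁ ⊓ U₂ ≤ U₂)).op).toFunctor.obj A₂) :
    ∃ (A : T.obj (op (U₁ ⊔ U₂)))
      (f1 : (T.map (homOfLE (le_sup_left : U₁ ≤ U₁ ⊔ U₂)).op).toFunctor.obj A ≅ A₁)
      (f2 : (T.map (homOfLE (le_sup_right : U₂ ≤ U₁ ⊔ U₂)).op).toFunctor.obj A ≅ A₂),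
      eqToIso (show
          (T.map (homOfLE (le_trans inf_le_left le_sup_left : U₁ ⊓ U₂ ≤ U₁ ⊔ U₂)).op).toFunctor.obj A =
          (T.map (homOfLE (inf_le_left : U₁ ⊓ U₂ ≤ U₁)).op).toFunctor.obj
            ((T.map (homOfLE (le_sup_left : U₁ ≤ U₁ ⊔ U₂)).op).toFunctor.obj A) by
            rw [show (homOfLE (le_trans inf_le_left le_sup_left : U₁ ⊓ U₂ ≤ U₁ ⊔ U₂)).op =
              (homOfLE (le_sup_left : U₁ ≤ U₁ ⊔ U₂)).op ≫
                (homOfLE (inf_le_left : U₁ ⊓ U₂ ≤ U₁)).op from rfl, T.map_comp]; rfl)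
        ≪≫ (T.map (homOfLE (inf_le_left : U₁ ⊓ U₂ ≤ U₁)).op).toFunctor.mapIso f1 ≪≫ f21 =
      eqToIso (show
          (T.map (homOfLE (le_trans inf_le_left le_sup_left : U₁ ⊓ U₂ ≤ U₁ ⊔ U₂)).op).toFunctor.obj A =
          (T.map (homOfLE (inf_le_right : U₁ ⊓ U₂ ≤ U₂)).op).toFunctor.obj
            ((T.map (homOfLE (le_sup_right : U₂ ≤ U₁ ⊔ U₂)).op).toFunctor.obj A) by
            rw [show (homOfLE (le_trans inf_le_left le_sup_left : U₁ ⊓ U₂ ≤ U₁ ⊔ U₂)).op =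
              (homOfLE (le_sup_right : U₂ ≤ U₁ ⊔ U₂)).op ≫
                (homOfLE (inf_le_right : U₁ ⊓ U₂ ≤ U₂)).op from rfl, T.map_comp]; rfl)
        ≪≫ (T.map (homOfLE (inf_le_right : U₁ ⊓ U₂ ≤ U₂)).op).toFunctor.mapIso f2 := by
  exact exists_glue (adj le_sup_left) (adj le_sup_right) (adj inf_le_left) (adj inf_le_right)
    (adj (le_trans inf_le_left le_sup_left))
    (map_homOfLE_comp_map_homOfLE T _ _ _) (map_homOfLE_comp_map_homOfLE T _ _ _)
    (isIso_map_map_of_baseChange T L hbc le_sup_left le_sup_right le_rfl inf_le_left)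
    (isIso_map_map_of_baseChange T L hbc le_sup_right le_sup_left (inf_comm U₂ U₁).le inf_le_right)
    A₁ A₂ f21
end

section
/- Let δ ⊆ ℝⁿ be a closed cone (a closed set stable under multiplication by nonnegative reals). Then there exists a decreasing sequence (δ_k)_{k≥1} of closed cones with ⋂_{k≥1} δ_k = δ such that each δ_k is a finite union of closed convex salient cones (closed convex cones γ with γ ∩ (−γ) ⊆ {0}). -/
/-! For a unit vector `x`, `angularCone (1 - ε) x` is the closed convex cone of vectors whose angle
with `x` is at most `arccos (1 - ε)`; it is salient for `ε < 1`. Cover the compact set `δ ∩ S^{n-1}`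
by finitely many balls of radius `ε / 2` centred in it; the union of the corresponding cones contains
`δ`. Halving `ε` makes the stages decrease, because tilting the axis of a cone by less than `ε / 2`
is absorbed by widening its parameter from `1 - ε / 2` to `1 - ε`. A nonzero vector in every stage
has its direction within `√(2ε)` of points of `δ ∩ S^{n-1}` for all `ε`, so it lies in `δ`, which
is closed. -/

open Metric Set Filter Topology NormedSpace

structure IsClosedConvexSalientCone {V : Type*} [AddCommGroup V] [Module ℝ V] [TopologicalSpace V]
    (γ : Set V) : Prop where
  isClosed : IsClosed γ
  convex : Convex ℝ γ
  smul_mem : ∀ r : ℝ, 0 ≤ r → ∀ x ∈ γ, r • x ∈ γ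
  inter_neg_subset : γ ∩ -γ ⊆ {0}

lemma isClosedConvexSalientCone_zero {V : Type*} [AddCommGroup V] [Module ℝ V]
    [TopologicalSpace V] [T1Space V] : IsClosedConvexSalientCone ({0} : Set V) where
  isClosed := isClosed_singleton
  convex := convex_singleton 0
  smul_mem r _ x hx := by simp_all
  inter_neg_subset := inter_subset_left

variable {E : Type*} [NormedAddCommGroup E] [InnerProductSpace ℝ E]

def angularCone (c : ℝ) (x : E) : Set E := {z | c * ‖z‖ ≤ inner ℝ x z}

section angularCone

variable {c c' : ℝ} {x x' z : E}

lemma isClosed_angularCone (c : ℝ) (x : E) : IsClosed (angularCone c x) :=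
  isClosed_le (continuous_const.mul continuous_norm) (continuous_const.inner continuous_id)

lemma convex_angularCone (hc : 0 ≤ c) (x : E) : Convex ℝ (angularCone c x) := by
  intro z hz w hw a b ha hb hab
  simp only [angularCone, mem_ofPred_eq, inner_add_right, real_inner_smul_right] at hz hw ⊢
  calc c * ‖a • z + b • w‖ ≤ c * (a * ‖z‖ + b * ‖w‖) := by
        gcongr
        exact (norm_add_le _ _).trans_eq <| by
          rw [norm_smul, norm_smul, Real.norm_of_nonneg ha, Real.norm_of_nonneg hb]
    _ ≤ a * inner ℝ x z + b * inner ℝ x w := by nlinarith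

lemma smul_mem_angularCone {r : ℝ} (hr : 0 ≤ r) (hz : z ∈ angularCone c x) :
    r • z ∈ angularCone c x := by
  simp only [angularCone, mem_ofPred_eq, norm_smul, Real.norm_of_nonneg hr,
    real_inner_smul_right] at hz ⊢
  nlinarith

lemma angularCone_inter_neg_subset (hc : 0 < c) (x : E) :
    angularCone c x ∩ -angularCone c x ⊆ {0} := by
  rintro z ⟨hz, hz'⟩
  simp only [angularCone, Set.mem_neg, mem_ofPred_eq, norm_neg, inner_neg_right] at hz hz'
  have : ‖z‖ ≤ 0 := by nlinarith
  simpa using this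

lemma isClosedConvexSalientCone_angularCone (hc : 0 < c) (x : E) :
    IsClosedConvexSalientCone (angularCone c x) where
  isClosed := isClosed_angularCone c x
  convex := convex_angularCone hc.le x
  smul_mem _ hr _ hz := smul_mem_angularCone hr hz
  inter_neg_subset := angularCone_inter_neg_subset hc x

lemma angularCone_subset_angularCone (h : ‖x - x'‖ ≤ c' - c) :
    angularCone c' x' ⊆ angularCone c x := by
  intro z hz
  simp only [angularCone, mem_ofPred_eq] at hz ⊢
  have h₁ : inner ℝ x z = inner ℝ x' z + inner ℝ (x - x') z := by
    rw [inner_sub_left]; ring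
  have h₂ : -(‖x - x'‖ * ‖z‖) ≤ inner ℝ (x - x') z :=
    neg_le_of_abs_le (abs_real_inner_le_norm _ _)
  nlinarith [mul_le_mul_of_nonneg_right h (norm_nonneg z)]

lemma mem_angularCone_iff_of_norm_eq_one {u : E} (hx : ‖x‖ = 1) (hu : ‖u‖ = 1) :
    u ∈ angularCone c x ↔ ‖x - u‖ ^ 2 ≤ 2 * (1 - c) := by
  simp only [angularCone, mem_ofPred_eq, norm_sub_sq_real, hx, hu]
  constructor <;> intro h <;> linarith

end angularCone

def conicalNbhd (ε : ℝ) (F : Set E) : Set E := {0} ∪ ⋃ x ∈ F, angularCone (1 - ε) x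

section conicalNbhd

variable {ε : ℝ} {F : Set E} {z : E}

lemma mem_conicalNbhd : z ∈ conicalNbhd ε F ↔ z = 0 ∨ ∃ x ∈ F, z ∈ angularCone (1 - ε) x := by
  simp [conicalNbhd]

lemma isClosed_conicalNbhd (hF : F.Finite) : IsClosed (conicalNbhd ε F) :=
  isClosed_singleton.union (hF.isClosed_biUnion fun x _ => isClosed_angularCone _ x)

lemma smul_mem_conicalNbhd {r : ℝ} (hr : 0 ≤ r) (hz : z ∈ conicalNbhd ε F) :
    r • z ∈ conicalNbhd ε F := by
  rw [mem_conicalNbhd] at hz ⊢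
  rcases hz with rfl | ⟨x, hx, hzx⟩
  · simp
  · exact Or.inr ⟨x, hx, smul_mem_angularCone hr hzx⟩

lemma exists_conicalNbhd_eq_iUnion (hF : F.Finite) (hε : ε < 1) :
    ∃ (m : ℕ) (γ : Fin m → Set E),
      conicalNbhd ε F = ⋃ i, γ i ∧ ∀ i, IsClosedConvexSalientCone (γ i) := by
  obtain ⟨m, γ, -, hγ⟩ := ((hF.image (angularCone (1 - ε))).insert {0}).fin_param
  refine ⟨m, γ, by rw [← sUnion_range, hγ, sUnion_insert, sUnion_image, conicalNbhd], fun i => ?_⟩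
  obtain h | ⟨x, -, h⟩ := hγ ▸ mem_range_self i
  · exact h ▸ isClosedConvexSalientCone_zero
  · exact h ▸ isClosedConvexSalientCone_angularCone (by linarith) x

lemma conicalNbhd_half_subset {F' : Set E} (hF' : F' ⊆ ⋃ x ∈ F, ball x (ε / 2)) :
    conicalNbhd (ε / 2) F' ⊆ conicalNbhd ε F := by
  intro z hz
  rw [mem_conicalNbhd] at hz ⊢
  rcases hz with rfl | ⟨x', hx', hzx'⟩
  · exact Or.inl rfl
  obtain ⟨x, hx, hxx'⟩ := mem_iUnion₂.mp (hF' hx')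
  refine Or.inr ⟨x, hx, angularCone_subset_angularCone ?_ hzx'⟩
  rw [← dist_eq_norm, dist_comm]
  linarith [mem_ball.mp hxx']

lemma subset_conicalNbhd {δ : Set E} (hδ : ∀ r : ℝ, 0 ≤ r → ∀ x ∈ δ, r • x ∈ δ)
    (hF : F ⊆ sphere 0 1) (hε : ε ≤ 8) (hcover : δ ∩ sphere 0 1 ⊆ ⋃ x ∈ F, ball x (ε / 2)) :
    δ ⊆ conicalNbhd ε F := by
  intro y hy
  rw [mem_conicalNbhd]
  rcases eq_or_ne y 0 with rfl | hy0
  · exact Or.inl rfl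
  have hu : normalize y ∈ δ ∩ sphere 0 1 :=
    ⟨hδ _ (inv_nonneg.2 (norm_nonneg y)) y hy, by simpa using norm_normalize_eq_one_iff.2 hy0⟩
  obtain ⟨x, hx, hux⟩ := mem_iUnion₂.mp (hcover hu)
  refine Or.inr ⟨x, hx, norm_smul_normalize y ▸ smul_mem_angularCone (norm_nonneg y) ?_⟩
  rw [mem_angularCone_iff_of_norm_eq_one (by simpa using hF hx) (by simpa using hu.2)]
  rw [mem_ball, dist_comm, dist_eq_norm] at hux
  nlinarith [norm_nonneg (x - normalize y)]

lemma tendsto_of_mem_angularCone {x : ℕ → E} {u : E} {ε : ℕ → ℝ} (hx : ∀ k, ‖x k‖ = 1)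
    (hu : ‖u‖ = 1) (hxu : ∀ k, u ∈ angularCone (1 - ε k) (x k)) (hε : Tendsto ε atTop (𝓝 0)) :
    Tendsto x atTop (𝓝 u) := by
  rw [tendsto_iff_norm_sub_tendsto_zero]
  have hsqrt : Tendsto (fun k => √(2 * ε k)) atTop (𝓝 0) := by
    have h2ε : Tendsto (fun k => 2 * ε k) atTop (𝓝 0) := by simpa using hε.const_mul 2
    simpa only [Real.sqrt_zero] using h2ε.sqrt
  refine squeeze_zero (fun _ => norm_nonneg _) (fun k => Real.le_sqrt_of_sq_le ?_) hsqrt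
  simpa using (mem_angularCone_iff_of_norm_eq_one (hx k) hu).1 (hxu k)

lemma iInter_conicalNbhd_subset {δ : Set E} (hδ : IsClosed δ)
    (hδcone : ∀ r : ℝ, 0 ≤ r → ∀ x ∈ δ, r • x ∈ δ) (h0 : (0 : E) ∈ δ) {ε : ℕ → ℝ}
    (hε : Tendsto ε atTop (𝓝 0)) {F : ℕ → Set E} (hF : ∀ k, F k ⊆ δ ∩ sphere 0 1) :
    ⋂ k, conicalNbhd (ε k) (F k) ⊆ δ := by
  intro z hz
  rcases eq_or_ne z 0 with rfl | hz0
  · exact h0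
  have hx : ∀ k, ∃ x ∈ F k, normalize z ∈ angularCone (1 - ε k) x := fun k => by
    obtain ⟨x, hx, hzx⟩ := ((mem_conicalNbhd.1 (mem_iInter.1 hz k)).resolve_left hz0)
    exact ⟨x, hx, smul_mem_angularCone (inv_nonneg.2 (norm_nonneg z)) hzx⟩
  choose x hxF hxz using hx
  have hunit : ∀ k, ‖x k‖ = 1 := fun k => by simpa using (hF k (hxF k)).2
  have hu : normalize z ∈ δ ∩ sphere 0 1 := (hδ.inter isClosed_sphere).mem_of_tendsto
    (tendsto_of_mem_angularCone hunit (norm_normalize_eq_one_iff.2 hz0) hxz hε)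
    (Eventually.of_forall fun k => hF k (hxF k))
  simpa [norm_smul_normalize] using hδcone _ (norm_nonneg z) _ hu.1

end conicalNbhd

/-- Every closed cone `δ ⊆ ℝⁿ` is the intersection of a decreasing sequence
of closed cones, each of which is a finite union of closed convex salient cones. -/
theorem stmt_12 {n : ℕ} (δ : Set (EuclideanSpace ℝ (Fin n)))
    (hδclosed : IsClosed δ)
    (hδcone : ∀ r : ℝ, 0 ≤ r → ∀ x ∈ δ, r • x ∈ δ) :
    ∃ δseq : ℕ → Set (EuclideanSpace ℝ (Fin n)),
      (∀ k, δseq (k + 1) ⊆ δseq k) ∧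
      (⋂ k, δseq k) = δ ∧
      (∀ k, IsClosed (δseq k) ∧
        (∀ r : ℝ, 0 ≤ r → ∀ x ∈ δseq k, r • x ∈ δseq k) ∧
        ∃ (m : ℕ) (γ : Fin m → Set (EuclideanSpace ℝ (Fin n))),
          δseq k = ⋃ i, γ i ∧
          ∀ i, IsClosed (γ i) ∧ Convex ℝ (γ i) ∧
            (∀ r : ℝ, 0 ≤ r → ∀ x ∈ γ i, r • x ∈ γ i) ∧
            γ i ∩ (-γ i) ⊆ {0}) := by
  obtain rfl | ⟨y, hy⟩ := δ.eq_empty_or_nonempty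
  · exact ⟨fun _ => ∅, fun _ => subset_rfl, iInter_const _, fun _ =>
      ⟨isClosed_empty, by simp, 0, finZeroElim, by simp, finZeroElim⟩⟩
  let ε : ℕ → ℝ := fun k => 2⁻¹ ^ (k + 1)
  have hε_pos (k : ℕ) : 0 < ε k := by positivity
  have hε_lt_one (k : ℕ) : ε k < 1 := pow_lt_one₀ (by norm_num) (by norm_num) k.succ_ne_zero
  have hε_tendsto : Tendsto ε atTop (𝓝 0) :=
    (tendsto_pow_atTop_nhds_zero_of_lt_one (by norm_num) (by norm_num)).comp
      (tendsto_add_atTop_nat 1)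
  choose F hFS hFfin hcover using fun k =>
    ((isCompact_sphere 0 1).inter_left hδclosed).finite_cover_balls (half_pos (hε_pos k))
  refine ⟨fun k => conicalNbhd (ε k) (F k), fun k => ?_, ?_, fun k => ?_⟩
  · have hε_succ : ε (k + 1) = ε k / 2 := by simp only [ε, pow_succ]; ring
    simpa only [hε_succ] using conicalNbhd_half_subset ((hFS (k + 1)).trans (hcover k))
  · refine (iInter_conicalNbhd_subset hδclosed hδcone (by simpa using hδcone 0 le_rfl y hy)
      hε_tendsto hFS).antisymm (subset_iInter fun k => ?_)
    exact subset_conicalNbhd hδcone ((hFS k).trans inter_subset_right)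
      (by linarith [hε_lt_one k]) (hcover k)
  · obtain ⟨m, γ, hγ, hγcone⟩ := exists_conicalNbhd_eq_iUnion (hFfin k) (hε_lt_one k)
    exact ⟨isClosed_conicalNbhd (hFfin k), fun r hr z hz => smul_mem_conicalNbhd hr hz, m, γ, hγ,
      fun i => ⟨(hγcone i).isClosed, (hγcone i).convex, (hγcone i).smul_mem,
        (hγcone i).inter_neg_subset⟩⟩
end
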